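/- arXiv:1009.3913 — 2 statements merged into one kernel-verified Lean document; each statement's English description precedes it below -/
import Mathlib

section
/- Let H be a Hopf algebra over a field k with antipode S, and let S' : H → k-linear→ H be a linear map satisfying Σ S'(x₍₂₎)·x₍₁₎ = ε(x)·1 and Σ x₍₂₎·S'(x₍₁₎) = ε(x)·1 for all x ∈ H (i.e. S' is an antipode for the co-opposite comultiplication). Let (V, π) and (Σ, σ) be H-modules given by algebra homomorphisms π : H → End(V), σ : H → End(Σ). Suppose a finite family of elements Z_i ∈ H and operators T_i ∈ End(Σ) satisfies the invariance condition: for every x ∈ H, Σ_i (x₍₂₎ · Z_i · S'(x₍₁₎)) ⊗ (σ(x₍₃₎) ∘ T_i ∘ σ(S(x₍₄₎))) = ε(x) · Σ_i Z_i ⊗ T_i in H ⊗ End(Σ). Then the operator D = Σ_i π(Z_i) ⊗ T_i on V ⊗ Σ commutes with the operator Σ π(x₍₁₎) ⊗ σ(x₍₂₎) for every x ∈ H. -/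
/-!
Identify `H ⊗ B` linearly with `Hᵐᵒᵖ ⊗ B` and work in the convolution algebra of linear maps
`H → Hᵐᵒᵖ ⊗ B`. With `u x = op x ⊗ 1`, `s' x = op (S' x) ⊗ 1`, `s x = 1 ⊗ σ (S x)` and
`v x = 1 ⊗ σ x`, the hypotheses on `S'` and `S` say `u * s' = 1` and `s * v = 1`, and the
adjoint action `adᵢ` of `H` on `Zᵢ ⊗ Tᵢ` is the convolution product
`s' * (op (· Zᵢ) ⊗ 1) * (1 ⊗ σ(·) Tᵢ) * s`. So `u * (Σᵢ adᵢ) * v` is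
`Σᵢ (op (· Zᵢ) ⊗ 1) * (1 ⊗ σ(·) Tᵢ)`, which is `x ↦ Δσ(x) D` for `Δσ(x) = Σ x₍₁₎ ⊗ σ(x₍₂₎)`
and `D = Σᵢ Zᵢ ⊗ Tᵢ`; by invariance `Σᵢ adᵢ = ε D` it is also `x ↦ Σ u(x₍₁₎) D v(x₍₂₎)`, which is
`x ↦ D Δσ(x)`. Associativity of the convolution product does all the coassociativity
bookkeeping.
-/

open TensorProduct

section Decomposition

variable {R M N P Q X : Type*} [CommSemiring R] [AddCommMonoid M] [AddCommMonoid N]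
  [AddCommMonoid P] [AddCommMonoid Q] [Module R M] [Module R N] [Module R P] [Module R Q]

theorem TensorProduct.exists_fin_sum_tmul_of_forall_eq_sum (g : X → M)
    (hg : ∀ m, ∃ (n : ℕ) (f : Fin n → X), m = ∑ i, g (f i)) (t : M ⊗[R] N) :
    ∃ (n : ℕ) (f : Fin n → X) (b : Fin n → N), t = ∑ i, g (f i) ⊗ₜ[R] b i := by
  induction t with
  | zero => exact ⟨0, Fin.elim0, Fin.elim0, by simp⟩
  | tmul m y =>
    obtain ⟨n, f, rfl⟩ := hg m
    exact ⟨n, f, fun _ => y, sum_tmul ..⟩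
  | add s t hs ht =>
    obtain ⟨n₁, f₁, b₁, rfl⟩ := hs
    obtain ⟨n₂, f₂, b₂, rfl⟩ := ht
    exact ⟨n₁ + n₂, Fin.append f₁ f₂, Fin.append b₁ b₂, by simp [Fin.sum_univ_add]⟩

theorem TensorProduct.exists_fin_sum_tmul (t : M ⊗[R] N) :
    ∃ (n : ℕ) (a : Fin n → M) (b : Fin n → N), t = ∑ i, a i ⊗ₜ[R] b i :=
  exists_fin_sum_tmul_of_forall_eq_sum id (fun m => ⟨1, fun _ => m, by simp⟩) t

theorem TensorProduct.exists_fin_sum_tmul_tmul_tmul (t : ((M ⊗[R] N) ⊗[R] P) ⊗[R] Q) :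
    ∃ (n : ℕ) (a : Fin n → M) (b : Fin n → N) (c : Fin n → P) (d : Fin n → Q),
      t = ∑ i, ((a i ⊗ₜ[R] b i) ⊗ₜ[R] c i) ⊗ₜ[R] d i := by
  have h₂ (r : M ⊗[R] N) : ∃ (n : ℕ) (f : Fin n → M × N), r = ∑ i, (f i).1 ⊗ₜ (f i).2 := by
    obtain ⟨n, a, b, rfl⟩ := exists_fin_sum_tmul r
    exact ⟨n, fun i => (a i, b i), rfl⟩
  have h₃ (s : (M ⊗[R] N) ⊗[R] P) :
      ∃ (n : ℕ) (f : Fin n → (M × N) × P), s = ∑ i, ((f i).1.1 ⊗ₜ (f i).1.2) ⊗ₜ (f i).2 := by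
    obtain ⟨n, f, c, rfl⟩ :=
      exists_fin_sum_tmul_of_forall_eq_sum (fun p : M × N => p.1 ⊗ₜ[R] p.2) h₂ s
    exact ⟨n, fun i => (f i, c i), rfl⟩
  obtain ⟨n, f, d, rfl⟩ :=
    exists_fin_sum_tmul_of_forall_eq_sum (fun q : (M × N) × P => (q.1.1 ⊗ₜ[R] q.1.2) ⊗ₜ[R] q.2)
      h₃ t
  exact ⟨n, fun i => (f i).1.1, fun i => (f i).1.2, fun i => (f i).2, d, rfl⟩

end Decomposition

section Convolution

open Coalgebra WithConv

variable {R C A : Type*} [CommSemiring R] [AddCommMonoid C] [Module R C] [Coalgebra R C]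
  [Semiring A] [Algebra R A]

theorem LinearMap.mul_toConv_mulLeft_comp (f g : WithConv (C →ₗ[R] A)) (a : A) :
    f * toConv (LinearMap.mulLeft R a ∘ₗ g.ofConv) =
      toConv (LinearMap.mulRight R a ∘ₗ f.ofConv) * g := by
  rw [LinearMap.convMul_def, LinearMap.convMul_def, ← LinearMap.comp_assoc,
    ← LinearMap.comp_assoc]
  congr 2
  ext
  simp [mul_assoc]

theorem LinearMap.mul_toConv_smulRight_counit (f : WithConv (C →ₗ[R] A)) (a : A) :
    f * toConv (counit.smulRight a) = toConv (LinearMap.mulRight R a ∘ₗ f.ofConv) := by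
  have : counit.smulRight a = LinearMap.mulLeft R a ∘ₗ (1 : WithConv (C →ₗ[R] A)).ofConv := by
    ext
    simp [LinearMap.convOne_def, Algebra.smul_def, Algebra.commutes]
  rw [this, LinearMap.mul_toConv_mulLeft_comp, mul_one]

theorem LinearMap.convMul_convMul_convMul_apply_of_eq_sum (f₁ f₂ f₃ f₄ : WithConv (C →ₗ[R] A))
    {x : C} {n : ℕ} {a b c d : Fin n → C}
    (h : map (map comul LinearMap.id) LinearMap.id (map comul LinearMap.id (comul (R := R) x)) =
      ∑ i, ((a i ⊗ₜ[R] b i) ⊗ₜ[R] c i) ⊗ₜ[R] d i) :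
    (f₁ * f₂ * f₃ * f₄) x = ∑ i, f₁ (a i) * f₂ (b i) * f₃ (c i) * f₄ (d i) := by
  have : (f₁ * f₂ * f₃ * f₄).ofConv = (LinearMap.mul' R A ∘ₗ map (LinearMap.mul' R A ∘ₗ
      map (LinearMap.mul' R A ∘ₗ map f₁.ofConv f₂.ofConv) f₃.ofConv) f₄.ofConv) ∘ₗ
      (map (map comul LinearMap.id) LinearMap.id ∘ₗ map comul LinearMap.id ∘ₗ comul) := by
    simp only [LinearMap.convMul_def, ofConv_toConv, ← LinearMap.comp_assoc,
      ← LinearMap.map_comp_rTensor]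
    rfl
  simp only [this, LinearMap.comp_apply, h, map_sum, map_tmul, LinearMap.mul'_apply]

end Convolution

namespace HopfAlgebra

open Coalgebra WithConv MulOpposite

variable {R H B : Type*} [CommSemiring R] [Semiring H] [HopfAlgebra R H] [Semiring B] [Algebra R B]

noncomputable def convInlOp (f : H →ₗ[R] H) : WithConv (H →ₗ[R] Hᵐᵒᵖ ⊗[R] B) :=
  toConv ((Algebra.TensorProduct.includeLeft (S := R)).toLinearMap ∘ₗ
    (opLinearEquiv R).toLinearMap ∘ₗ f)

noncomputable def convInr (g : H →ₗ[R] B) : WithConv (H →ₗ[R] Hᵐᵒᵖ ⊗[R] B) :=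
  toConv (Algebra.TensorProduct.includeRight.toLinearMap ∘ₗ g)

/-- `x ↦ Σ op (x₍₂₎ Z S'(x₍₁₎)) ⊗ σ(x₍₃₎) T σ(S x₍₄₎)`. -/
noncomputable def convAdjoint (S' : H →ₗ[R] H) (σ : H →ₐ[R] B) (Z : H) (T : B) :
    WithConv (H →ₗ[R] Hᵐᵒᵖ ⊗[R] B) :=
  convInlOp S' * convInlOp (LinearMap.mulRight R Z) *
    convInr (LinearMap.mulRight R T ∘ₗ σ.toLinearMap) * convInr (σ.toLinearMap ∘ₗ antipode R)

theorem convInlOp_id_mul_convInlOp {S' : H →ₗ[R] H}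
    (hS' : ∀ (x : H) (n : ℕ) (a b : Fin n → H), comul (R := R) x = ∑ i, a i ⊗ₜ[R] b i →
      ∑ i, S' (b i) * a i = counit (R := R) x • (1 : H)) :
    convInlOp (B := B) LinearMap.id * convInlOp S' = 1 := by
  ext x
  obtain ⟨n, a, b, hab⟩ := exists_fin_sum_tmul (comul (R := R) x)
  have h := congrArg (fun h : H => op h ⊗ₜ[R] (1 : B)) (hS' x n a b hab)
  simp only [Finset.op_sum, op_mul, sum_tmul, op_smul, op_one, ← smul_tmul'] at h
  simpa [convInlOp, hab, Algebra.algebraMap_eq_smul_one, Algebra.TensorProduct.one_def] using h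

theorem convInr_antipode_mul_convInr (σ : H →ₐ[R] B) :
    convInr (σ.toLinearMap ∘ₗ antipode R) * convInr (R := R) (H := H) σ.toLinearMap = 1 := by
  have h := LinearMap.algHom_comp_convMul_distrib
    ((Algebra.TensorProduct.includeRight (R := R) (A := Hᵐᵒᵖ)).comp σ)
    (toConv (antipode R)) (toConv LinearMap.id)
  rw [LinearMap.antipode_mul_id] at h
  ext x
  simpa [convInr, LinearMap.comp_assoc, Algebra.algebraMap_eq_smul_one, smul_tmul',
    Algebra.TensorProduct.one_def] using (LinearMap.congr_fun h x).symm

theorem convInlOp_id_mul_convAdjoint_mul_convInr {S' : H →ₗ[R] H}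
    (hS' : convInlOp (B := B) LinearMap.id * convInlOp S' = 1) (σ : H →ₐ[R] B) (Z : H) (T : B) :
    convInlOp LinearMap.id * convAdjoint S' σ Z T * convInr σ.toLinearMap =
      convInlOp (LinearMap.mulRight R Z) * convInr (LinearMap.mulRight R T ∘ₗ σ.toLinearMap) := by
  -- `mul_assoc` and friends restated at this type, so that `rw` and `simp` match the module
  -- instance of `Hᵐᵒᵖ ⊗[R] B` with which the convolution product was elaborated
  have assoc (f g h : WithConv (H →ₗ[R] Hᵐᵒᵖ ⊗[R] B)) : f * g * h = f * (g * h) := mul_assoc f g h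
  have one_mul' (f : WithConv (H →ₗ[R] Hᵐᵒᵖ ⊗[R] B)) : 1 * f = f := one_mul f
  have mul_one' (f : WithConv (H →ₗ[R] Hᵐᵒᵖ ⊗[R] B)) : f * 1 = f := mul_one f
  calc convInlOp LinearMap.id * convAdjoint S' σ Z T * convInr σ.toLinearMap
      = (convInlOp LinearMap.id * convInlOp S') * convInlOp (LinearMap.mulRight R Z) *
          convInr (LinearMap.mulRight R T ∘ₗ σ.toLinearMap) *
          (convInr (σ.toLinearMap ∘ₗ antipode R) * convInr σ.toLinearMap) := by
        simp only [convAdjoint, assoc]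
    _ = _ := by rw [hS', convInr_antipode_mul_convInr, one_mul', mul_one']

theorem sum_convAdjoint_eq_smulRight_counit {S' : H →ₗ[R] H} {σ : H →ₐ[R] B}
    {ι : Type*} [Fintype ι] {Z : ι → H} {T : ι → B}
    (hinv : ∀ (x : H) (n : ℕ) (a b c d : Fin n → H),
      map (map comul LinearMap.id) LinearMap.id (map comul LinearMap.id (comul (R := R) x)) =
        ∑ i, ((a i ⊗ₜ[R] b i) ⊗ₜ[R] c i) ⊗ₜ[R] d i →
      ∑ i, ∑ j, (b j * Z i * S' (a j)) ⊗ₜ[R] (σ (c j) * T i * σ (antipode R (d j))) =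
        counit (R := R) x • ∑ i, Z i ⊗ₜ[R] T i) :
    ∑ i, convAdjoint S' σ (Z i) (T i) = toConv (counit.smulRight (∑ i, op (Z i) ⊗ₜ[R] T i)) := by
  ext x
  obtain ⟨n, a, b, c, d, h⟩ := exists_fin_sum_tmul_tmul_tmul
    (map (map comul LinearMap.id) LinearMap.id (map comul LinearMap.id (comul (R := R) x)))
  have := congrArg ((opLinearEquiv R).toLinearMap.rTensor B) (hinv x n a b c d h)
  simp only [ofConv_sum, LinearMap.sum_apply, convAdjoint,
    LinearMap.convMul_convMul_convMul_apply_of_eq_sum _ _ _ _ h]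
  simpa [convInlOp, convInr, Finset.smul_sum, mul_assoc] using this

theorem commute_sum_tmul_lTensor_comul {S' : H →ₗ[R] H}
    (hS' : convInlOp (B := B) LinearMap.id * convInlOp S' = 1) (σ : H →ₐ[R] B)
    {ι : Type*} [Fintype ι] (Z : ι → H) (T : ι → B)
    (hinv : ∑ i, convAdjoint S' σ (Z i) (T i) =
      toConv (counit.smulRight (∑ i, op (Z i) ⊗ₜ[R] T i))) (x : H) :
    Commute (∑ i, Z i ⊗ₜ[R] T i) (σ.toLinearMap.lTensor H (comul x)) := by
  set D := ∑ i, Z i ⊗ₜ[R] T i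
  set D' := ∑ i, op (Z i) ⊗ₜ[R] T i
  let unopTensor : Hᵐᵒᵖ ⊗[R] B →ₗ[R] H ⊗[R] B := (opLinearEquiv R).symm.toLinearMap.rTensor B
  have key : toConv (LinearMap.mulRight R D' ∘ₗ (convInlOp LinearMap.id).ofConv) *
      convInr σ.toLinearMap = ∑ i, convInlOp (LinearMap.mulRight R (Z i)) *
        convInr (LinearMap.mulRight R (T i) ∘ₗ σ.toLinearMap) := by
    rw [← LinearMap.mul_toConv_smulRight_counit, ← hinv, Finset.mul_sum, Finset.sum_mul]
    exact Finset.sum_congr rfl fun i _ =>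
      convInlOp_id_mul_convAdjoint_mul_convInr hS' σ (Z i) (T i)
  have hleft : unopTensor ∘ₗ LinearMap.mul' R _ ∘ₗ
      map (LinearMap.mulRight R D' ∘ₗ (convInlOp LinearMap.id).ofConv)
        (convInr σ.toLinearMap).ofConv = LinearMap.mulLeft R D ∘ₗ σ.toLinearMap.lTensor H := by
    ext a b
    simp [unopTensor, convInlOp, convInr, D, D', Finset.mul_sum, Finset.sum_mul]
  have hright (Z : H) (T : B) : unopTensor ∘ₗ LinearMap.mul' R _ ∘ₗ
      map (convInlOp (LinearMap.mulRight R Z)).ofConv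
        (convInr (LinearMap.mulRight R T ∘ₗ σ.toLinearMap)).ofConv =
      LinearMap.mulRight R (Z ⊗ₜ[R] T) ∘ₗ σ.toLinearMap.lTensor H := by
    ext a b
    simp [unopTensor, convInlOp, convInr]
  calc D * σ.toLinearMap.lTensor H (comul x)
      = unopTensor ((toConv (LinearMap.mulRight R D' ∘ₗ (convInlOp LinearMap.id).ofConv) *
          convInr σ.toLinearMap).ofConv x) := (LinearMap.congr_fun hleft (comul x)).symm
    _ = ∑ i, unopTensor ((convInlOp (LinearMap.mulRight R (Z i)) *
          convInr (LinearMap.mulRight R (T i) ∘ₗ σ.toLinearMap)).ofConv x) := by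
        rw [key, ofConv_sum, LinearMap.sum_apply, map_sum]
    _ = ∑ i, σ.toLinearMap.lTensor H (comul x) * (Z i ⊗ₜ[R] T i) :=
        Finset.sum_congr rfl fun i _ => LinearMap.congr_fun (hright (Z i) (T i)) (comul x)
    _ = σ.toLinearMap.lTensor H (comul x) * D := (Finset.mul_sum ..).symm

end HopfAlgebra

theorem dirac_commutes_of_invariant_general
    {k : Type} [Field k] {H : Type} [Ring H] [HopfAlgebra k H]
    (S' : H →ₗ[k] H)
    (hS'left : ∀ (x : H) (n : ℕ) (a b : Fin n → H),
      Coalgebra.comul (R := k) x = ∑ i, a i ⊗ₜ[k] b i →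
      ∑ i, S' (b i) * a i = Coalgebra.counit (R := k) x • (1 : H))
    {V W : Type} [AddCommGroup V] [Module k V] [AddCommGroup W] [Module k W]
    (π : H →ₐ[k] Module.End k V) (σ : H →ₐ[k] Module.End k W)
    (m : ℕ) (Z : Fin m → H) (T : Fin m → Module.End k W)
    (hinv : ∀ (x : H) (n : ℕ) (a b c d : Fin n → H),
      TensorProduct.map (TensorProduct.map (Coalgebra.comul (R := k)) LinearMap.id) LinearMap.id
          (TensorProduct.map (Coalgebra.comul (R := k)) LinearMap.id
            (Coalgebra.comul (R := k) x)) =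
        ∑ i, ((a i ⊗ₜ[k] b i) ⊗ₜ[k] c i) ⊗ₜ[k] d i →
      ∑ i, ∑ j, (b j * Z i * S' (a j)) ⊗ₜ[k]
          (σ (c j) * T i * σ (HopfAlgebra.antipode (R := k) (d j))) =
        Coalgebra.counit (R := k) x • ∑ i, Z i ⊗ₜ[k] T i) :
    ∀ (x : H) (n : ℕ) (a b : Fin n → H),
      Coalgebra.comul (R := k) x = ∑ j, a j ⊗ₜ[k] b j →
      Commute (∑ i, TensorProduct.map (π (Z i)) (T i))
        (∑ j, TensorProduct.map (π (a j)) (σ (b j))) := by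
  intro x n a b hab
  have hcomm := HopfAlgebra.commute_sum_tmul_lTensor_comul
    (HopfAlgebra.convInlOp_id_mul_convInlOp hS'left) σ Z T
    (HopfAlgebra.sum_convAdjoint_eq_smulRight_counit hinv) x
  rw [hab] at hcomm
  simpa [Module.endTensorEndAlgHom_apply, AlgebraTensorModule.map_eq] using hcomm.map
    (Module.endTensorEndAlgHom.comp (Algebra.TensorProduct.map π (AlgHom.id k (Module.End k W))))

/-- Let `H` be a Hopf algebra over a field `k` with antipode `S`, and let
`S' : H →ₗ[k] H` satisfy `Σ S'(x₂)·x₁ = ε(x)·1` and `Σ x₂·S'(x₁) = ε(x)·1`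
(an antipode for the co-opposite comultiplication).  Let `(V, π)`, `(W, σ)` be `H`-modules
given by algebra homomorphisms into the endomorphisms.  If a finite family `Z i ∈ H`,
`T i ∈ End W` satisfies the invariance condition
`Σᵢ (x₂ Zᵢ S'(x₁)) ⊗ (σ(x₃) ∘ Tᵢ ∘ σ(S x₄)) = ε(x) Σᵢ Zᵢ ⊗ Tᵢ`,
then `D = Σᵢ π(Zᵢ) ⊗ Tᵢ` commutes with `Σ π(x₁) ⊗ σ(x₂)` for every `x ∈ H`.
Sweedler decompositions are encoded by quantifying over representations of the (iterated)
comultiplication as finite sums of elementary tensors. -/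
theorem dirac_commutes_of_invariant
    {k : Type} [Field k] {H : Type} [Ring H] [HopfAlgebra k H]
    (S' : H →ₗ[k] H)
    (hS'left : ∀ (x : H) (n : ℕ) (a b : Fin n → H),
      Coalgebra.comul (R := k) x = ∑ i, a i ⊗ₜ[k] b i →
      ∑ i, S' (b i) * a i = Coalgebra.counit (R := k) x • (1 : H))
    (hS'right : ∀ (x : H) (n : ℕ) (a b : Fin n → H),
      Coalgebra.comul (R := k) x = ∑ i, a i ⊗ₜ[k] b i →
      ∑ i, b i * S' (a i) = Coalgebra.counit (R := k) x • (1 : H))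
    {V W : Type} [AddCommGroup V] [Module k V] [AddCommGroup W] [Module k W]
    (π : H →ₐ[k] Module.End k V) (σ : H →ₐ[k] Module.End k W)
    (m : ℕ) (Z : Fin m → H) (T : Fin m → Module.End k W)
    (hinv : ∀ (x : H) (n : ℕ) (a b c d : Fin n → H),
      TensorProduct.map (TensorProduct.map (Coalgebra.comul (R := k)) LinearMap.id) LinearMap.id
          (TensorProduct.map (Coalgebra.comul (R := k)) LinearMap.id
            (Coalgebra.comul (R := k) x)) =
        ∑ i, ((a i ⊗ₜ[k] b i) ⊗ₜ[k] c i) ⊗ₜ[k] d i →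
      ∑ i, ∑ j, (b j * Z i * S' (a j)) ⊗ₜ[k]
          (σ (c j) * T i * σ (HopfAlgebra.antipode (R := k) (d j))) =
        Coalgebra.counit (R := k) x • ∑ i, Z i ⊗ₜ[k] T i) :
    ∀ (x : H) (n : ℕ) (a b : Fin n → H),
      Coalgebra.comul (R := k) x = ∑ j, a j ⊗ₜ[k] b j →
      Commute (∑ i, TensorProduct.map (π (Z i)) (T i))
        (∑ j, TensorProduct.map (π (a j)) (σ (b j))) :=
  dirac_commutes_of_invariant_general S' hS'left π σ m Z T hinv
end

section
/- Let q be a real number with q > 0 and q ≠ 1, let [n] = (qⁿ − q⁻ⁿ)/(q − q⁻¹) denote the q-integers, and fix natural numbers k and m. Then the series Σ_{n=0}^∞ n^m · | [n+k]/√(1 + [n+k]²) − [n]/√(1 + [n]²) | converges, i.e. the sequence a_n = [n+k]/√(1+[n+k]²) − [n]/√(1+[n]²) decays rapidly. (This is the estimate showing that the commutators [F, X(k)] of the sign operator F = D(1+D²)^{−1/2} with the shift-by-k blocks of the GNS representation of ℂ[SU_q(2)] are trace class.) -/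
/-!
Since `[n]` is invariant under `q ↦ q⁻¹` we may take `q > 1`. Then `[n + 1] ≥ qⁿ`, and
`1 - x/√(1+x²) ≤ 1/(1+x²)` shows that `x/√(1+x²)` tends to `1` like `x⁻²` as `x → ∞`.
Both terms of the difference are therefore at most `1` and within `O(q⁻²ⁿ)` of it, and
`Σ nᵐ q⁻²ⁿ` converges.
-/

/-- The `q`-integer `[n] = (qⁿ − q⁻ⁿ)/(q − q⁻¹)`. -/
noncomputable def qInt (q : ℝ) (n : ℕ) : ℝ := (q ^ n - q⁻¹ ^ n) / (q - q⁻¹)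

open Real

lemma qInt_inv (q : ℝ) (n : ℕ) : qInt q⁻¹ n = qInt q n := by
  rw [qInt, qInt, inv_inv, ← neg_div_neg_eq, neg_sub, neg_sub]

lemma pow_le_qInt_succ {q : ℝ} (hq : 1 < q) (n : ℕ) : q ^ n ≤ qInt q (n + 1) := by
  have hq0 : 0 < q := one_pos.trans hq
  have hinv : q⁻¹ < 1 := inv_lt_one_of_one_lt₀ hq
  have hinv_pow : q⁻¹ ^ (n + 1) ≤ q⁻¹ * q ^ n := by
    rw [pow_succ']
    gcongr
    linarith
  rw [qInt, le_div_iff₀ (by linarith)]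
  calc q ^ n * (q - q⁻¹) = q ^ (n + 1) - q⁻¹ * q ^ n := by ring
    _ ≤ q ^ (n + 1) - q⁻¹ ^ (n + 1) := by linarith

lemma div_sqrt_one_add_sq_le_one (x : ℝ) : x / √(1 + x ^ 2) ≤ 1 := by
  rw [div_le_one (sqrt_pos.mpr (by positivity))]
  calc x ≤ |x| := le_abs_self x
    _ = √(x ^ 2) := (sqrt_sq_eq_abs x).symm
    _ ≤ √(1 + x ^ 2) := sqrt_le_sqrt (by linarith)

lemma one_sub_div_sqrt_one_add_sq_le {x : ℝ} (hx : 0 ≤ x) :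
    1 - x / √(1 + x ^ 2) ≤ (1 + x ^ 2)⁻¹ := by
  set s := √(1 + x ^ 2)
  have hs : 0 < s := sqrt_pos.mpr (by positivity)
  have hs_sq : s ^ 2 = 1 + x ^ 2 := sq_sqrt (by positivity)
  have hxs : x ≤ s := (div_le_one hs).mp (div_sqrt_one_add_sq_le_one x)
  rw [← hs_sq, one_sub_div hs.ne', ← one_div, div_le_div_iff₀ hs (by positivity)]
  -- `(s - x) s ≤ (s - x)(s + x) = s² - x² = 1`
  nlinarith [mul_nonneg (mul_nonneg (sub_nonneg.mpr hxs) hx) hs.le]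

lemma one_sub_div_sqrt_one_add_qInt_sq_le {q : ℝ} (hq : 1 < q) (n : ℕ) :
    1 - qInt q n / √(1 + qInt q n ^ 2) ≤ q ^ 2 * (q⁻¹ ^ 2) ^ n := by
  have hq0 : 0 < q := one_pos.trans hq
  rcases n with _ | n
  · simpa [qInt] using one_le_pow₀ (n := 2) hq.le
  have hqn : 0 < q ^ n := by positivity
  have hlower := pow_le_qInt_succ hq n
  calc 1 - qInt q (n + 1) / √(1 + qInt q (n + 1) ^ 2)
      ≤ (1 + qInt q (n + 1) ^ 2)⁻¹ := one_sub_div_sqrt_one_add_sq_le (hqn.le.trans hlower)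
    _ ≤ ((q ^ n) ^ 2)⁻¹ := by gcongr; nlinarith
    _ = q ^ 2 * (q⁻¹ ^ 2) ^ (n + 1) := by
      simp only [inv_pow, ← pow_mul]
      field_simp
      ring

lemma sign_operator_commutator_summable_of_one_lt {q : ℝ} (hq : 1 < q) (k m : ℕ) :
    Summable (fun n : ℕ =>
      (n : ℝ) ^ m *
        |qInt q (n + k) / √(1 + qInt q (n + k) ^ 2) - qInt q n / √(1 + qInt q n ^ 2)|) := by
  have hq0 : 0 < q := one_pos.trans hq
  set r := q⁻¹ ^ 2
  have hr0 : 0 ≤ r := by positivity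
  have hr1 : r < 1 := pow_lt_one₀ (by positivity) (inv_lt_one_of_one_lt₀ hq) two_ne_zero
  have hgeom : Summable (fun n : ℕ => 2 * q ^ 2 * ((n : ℝ) ^ m * r ^ n)) :=
    (summable_pow_mul_geometric_of_norm_lt_one m (r := r)
      (by rwa [norm_of_nonneg hr0])).mul_left _
  refine hgeom.of_nonneg_of_le (fun n => by positivity) fun n => ?_
  set a := qInt q n / √(1 + qInt q n ^ 2)
  set b := qInt q (n + k) / √(1 + qInt q (n + k) ^ 2)
  have ha : 1 - a ≤ q ^ 2 * r ^ n := one_sub_div_sqrt_one_add_qInt_sq_le hq n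
  have hb : 1 - b ≤ q ^ 2 * r ^ n :=
    (one_sub_div_sqrt_one_add_qInt_sq_le hq (n + k)).trans <|
      mul_le_mul_of_nonneg_left (pow_le_pow_of_le_one hr0 hr1.le (n.le_add_right k)) (by positivity)
  have hdiff : |b - a| ≤ 2 * q ^ 2 * r ^ n := by
    have ha_le : a ≤ 1 := div_sqrt_one_add_sq_le_one _
    have hb_le : b ≤ 1 := div_sqrt_one_add_sq_le_one _
    rw [abs_le]
    constructor <;> linarith
  calc (n : ℝ) ^ m * |b - a| ≤ (n : ℝ) ^ m * (2 * q ^ 2 * r ^ n) := by gcongr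
    _ = 2 * q ^ 2 * ((n : ℝ) ^ m * r ^ n) := by ring

/-- For real `q > 0`, `q ≠ 1` and fixed naturals `k`, `m`, the series
`Σ_n n^m · | [n+k]/√(1+[n+k]²) − [n]/√(1+[n]²) |` converges; i.e. the sequence
`a_n = [n+k]/√(1+[n+k]²) − [n]/√(1+[n]²)` decays rapidly.  This is the estimate showing
that the commutators `[F, X(k)]` of the sign operator `F = D(1+D²)^{-1/2}` with the
shift-by-`k` blocks of the GNS representation of `ℂ[SU_q(2)]` are trace class. -/
theorem sign_operator_commutator_summable (q : ℝ) (hq : 0 < q) (hq1 : q ≠ 1) (k m : ℕ) :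
    Summable (fun n : ℕ =>
      (n : ℝ) ^ m *
        |qInt q (n + k) / Real.sqrt (1 + qInt q (n + k) ^ 2) -
          qInt q n / Real.sqrt (1 + qInt q n ^ 2)|) := by
  rcases hq1.lt_or_gt with hlt | hgt
  · simpa only [qInt_inv] using
      sign_operator_commutator_summable_of_one_lt ((one_lt_inv₀ hq).mpr hlt) k m
  · exact sign_operator_commutator_summable_of_one_lt hgt k m
end
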